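/- arXiv:2204.01096 — 5 statements merged into one kernel-verified Lean document; each statement's English description precedes it below -/
import Mathlib

section
/- Let λ < 0. Then the cubic equation 4λ²e³ + 8λ³e² − e + 2λ = 0 has exactly one positive real root. -/
theorem stmt_5 (l : ℝ) (hl : l < 0) :
    ∃! e : ℝ, 0 < e ∧ 4*l^2*e^3 + 8*l^3*e^2 - e + 2*l = 0 := by
  have hl' : 0 < -l := by linarith
  -- Existence via the intermediate value theorem
  have hex : ∃ e : ℝ, 0 < e ∧ 4*l^2*e^3 + 8*l^3*e^2 - e + 2*l = 0 := by
    set f : ℝ → ℝ := fun e => 4*l^2*e^3 + 8*l^3*e^2 - e + 2*l with hf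
    obtain ⟨N, hN⟩ : ∃ x : ℝ, x = -4*l - 1/l := ⟨_, rfl⟩
    have h1 : 1/l < 0 := one_div_neg.mpr hl
    have hN0 : 0 < N := by rw [hN]; linarith
    have hll : l * (1/l) = 1 := mul_one_div_cancel hl.ne
    have hNl : -l * N ≥ 1 := by rw [hN]; nlinarith [sq_nonneg l]
    have h2 : N + 2*l ≥ N/2 := by rw [hN]; linarith
    have h2' : 0 < N + 2*l := lt_of_lt_of_le (half_pos hN0) h2
    have h3 : 4*l^2*N^2 ≥ 4 := by nlinarith [hNl, mul_pos hl' hN0]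
    have h4 : 4*l^2*N^2*(N+2*l) ≥ 4*(N+2*l) := mul_le_mul_of_nonneg_right h3 h2'.le
    have hfN : 0 < f N := by
      have hfeq : f N = 4*l^2*N^2*(N+2*l) - N + 2*l := by simp only [hf]; ring
      rw [hfeq]
      nlinarith [h4, h2]
    have hcont : ContinuousOn f (Set.Icc 0 N) := by fun_prop
    have key := intermediate_value_Icc hN0.le hcont
    have h0mem : (0:ℝ) ∈ Set.Icc (f 0) (f N) := by
      constructor
      · show f 0 ≤ 0
        simp only [hf]
        norm_num
        linarith
      · exact hfN.le
    obtain ⟨c, hc, hfc⟩ := key h0mem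
    refine ⟨c, ?_, hfc⟩
    rcases hc.1.lt_or_eq with h | h
    · exact h
    · exfalso
      rw [← h] at hfc
      simp only [hf] at hfc
      norm_num at hfc
      linarith
  -- Uniqueness
  obtain ⟨a, ha, fa⟩ := hex
  refine ⟨a, ⟨ha, fa⟩, ?_⟩
  rintro b ⟨hb, fb⟩
  -- key: two distinct positive roots are impossible
  have huniq : ∀ x y : ℝ, 0 < x → 0 < y →
      4*l^2*x^3 + 8*l^3*x^2 - x + 2*l = 0 →
      4*l^2*y^3 + 8*l^3*y^2 - y + 2*l = 0 → x < y → False := by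
    intro x y hx hy fx fy hxy
    have hXa : 0 < 12*l^2*x^2 + 16*l^3*x - 1 := by
      nlinarith [fx, mul_pos hx hx, mul_pos (mul_pos hx hx) hl', mul_pos hx hl']
    have hXb : 0 < 12*l^2*y^2 + 16*l^3*y - 1 := by
      nlinarith [fy, mul_pos hy hy, mul_pos (mul_pos hy hy) hl', mul_pos hy hl']
    have hva : 0 < 3*x + 4*l := by
      nlinarith [hXa, mul_pos (mul_pos hx hx) (mul_pos hl' hl'), mul_pos hx (mul_pos hl' hl')]
    have hvb : 0 < 3*y + 4*l := by
      nlinarith [hXb, mul_pos (mul_pos hy hy) (mul_pos hl' hl'), mul_pos hy (mul_pos hl' hl')]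
    have hP : 0 < 4*l^2*(x^2+x*y+y^2) + 8*l^3*(x+y) - 1 := by
      nlinarith [hXa, hXb, hva, hvb, mul_pos hva hvb, sq_nonneg (x-y), sq_nonneg (x+y),
        mul_pos (mul_pos hl' hl') (mul_pos hva hvb), sq_nonneg l]
    nlinarith [mul_pos (sub_pos.2 hxy) hP]
  rcases lt_trichotomy b a with h | h | h
  · exact absurd (huniq b a hb ha fb fa h) not_false
  · exact h
  · exact absurd (huniq a b ha hb fa fb h) not_false
end

section
/- The function p : ℝ → ℝ defined by p(λ) = −√((1 + η_λ⁴)/(3 + η_λ⁴)), where η_λ is the unique positive solution of μ⁴ + 2λμ³ − 1 = 0, is strictly increasing and takes values in the open interval (−1, −1/√3). -/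
theorem stmt_6 (η : ℝ → ℝ)
    (hη : ∀ l : ℝ, 0 < η l ∧ (η l)^4 + 2*l*(η l)^3 - 1 = 0)
    (p : ℝ → ℝ)
    (hp : ∀ l : ℝ, p l = -Real.sqrt ((1 + (η l)^4)/(3 + (η l)^4))) :
    StrictMono p ∧ ∀ l : ℝ, p l ∈ Set.Ioo (-1 : ℝ) (-1/Real.sqrt 3) := by
  have hpos : ∀ l, 0 < η l := fun l => (hη l).1
  have heq : ∀ l, (η l)^4 + 2*l*(η l)^3 = 1 := by
    intro l; have := (hη l).2; linarith
  -- η is strictly antitone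
  have hanti : ∀ l1 l2 : ℝ, l1 < l2 → η l2 < η l1 := by
    intro l1 l2 hl
    by_contra h
    push_neg at h
    set a := η l1 with ha
    set b := η l2 with hb
    have hapos := hpos l1
    have hbpos := hpos l2
    have h1 := heq l1
    have h2 := heq l2
    have hab3 : (0:ℝ) < a^3 * b^3 := by positivity
    have key : 2*l1*(a^3*b^3) < 2*l2*(a^3*b^3) := by nlinarith
    have e1 : 2*l1*(a^3*b^3) = (1 - a^4)*b^3 := by
      calc 2*l1*(a^3*b^3) = (2*l1*a^3)*b^3 := by ring
        _ = (1 - a^4)*b^3 := by rw [show 2*l1*a^3 = 1 - a^4 from by linarith]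
    have e2 : 2*l2*(a^3*b^3) = (1 - b^4)*a^3 := by
      calc 2*l2*(a^3*b^3) = (2*l2*b^3)*a^3 := by ring
        _ = (1 - b^4)*a^3 := by rw [show 2*l2*b^3 = 1 - b^4 from by linarith]
    have key3 : (1 - a^4)*b^3 < (1 - b^4)*a^3 := by rw [← e1, ← e2]; exact key
    have p1 : a^3 ≤ b^3 := pow_le_pow_left₀ hapos.le h 3
    have p2 : 0 ≤ a^3*b^3*(b-a) := mul_nonneg hab3.le (by linarith)
    nlinarith [key3, p1, p2]
  -- basic facts about the ratio
  have hr : ∀ l, (1:ℝ)/3 < (1 + (η l)^4)/(3 + (η l)^4) ∧ (1 + (η l)^4)/(3 + (η l)^4) < 1 := by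
    intro l
    have ht : (0:ℝ) < (η l)^4 := pow_pos (hpos l) 4
    constructor
    · rw [div_lt_div_iff₀ (by norm_num) (by linarith)]; linarith
    · rw [div_lt_one (by linarith)]; linarith
  constructor
  · intro l1 l2 hl
    have hab : η l2 < η l1 := hanti l1 l2 hl
    have ht : (η l2)^4 < (η l1)^4 := pow_lt_pow_left₀ hab (hpos l2).le (by norm_num)
    have ht2 : (0:ℝ) < (η l2)^4 := pow_pos (hpos l2) 4
    have hrlt : (1 + (η l2)^4)/(3 + (η l2)^4) < (1 + (η l1)^4)/(3 + (η l1)^4) := by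
      rw [div_lt_div_iff₀ (by linarith) (by linarith)]; nlinarith
    have hs : Real.sqrt ((1 + (η l2)^4)/(3 + (η l2)^4)) <
        Real.sqrt ((1 + (η l1)^4)/(3 + (η l1)^4)) :=
      Real.sqrt_lt_sqrt (by positivity) hrlt
    rw [hp l1, hp l2]
    linarith
  · intro l
    have ht : (0:ℝ) < (η l)^4 := pow_pos (hpos l) 4
    obtain ⟨hr1, hr2⟩ := hr l
    have hrnn : (0:ℝ) ≤ (1 + (η l)^4)/(3 + (η l)^4) := by positivity
    have hs1 : Real.sqrt ((1 + (η l)^4)/(3 + (η l)^4)) < 1 := by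
      calc Real.sqrt ((1 + (η l)^4)/(3 + (η l)^4)) < Real.sqrt 1 := Real.sqrt_lt_sqrt hrnn hr2
        _ = 1 := Real.sqrt_one
    have hs2 : 1/Real.sqrt 3 < Real.sqrt ((1 + (η l)^4)/(3 + (η l)^4)) := by
      have : Real.sqrt ((1:ℝ)/3) = 1/Real.sqrt 3 := by
        rw [one_div, Real.sqrt_inv, one_div]
      rw [← this]
      exact Real.sqrt_lt_sqrt (by norm_num) hr1
    rw [hp l]
    constructor
    · linarith
    · have : -1/Real.sqrt 3 = -(1/Real.sqrt 3) := by ring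
      rw [this]; linarith
end

section
/- Let e₁ > e₂ > 0 and define the improper integral ω = 2∫_{e₂}^{e₁} dμ / (μ² √(−(μ−e₁)(μ−e₂))). Then ω = π(e₁ + e₂)/(e₁e₂)^{3/2}. -/
open Real MeasureTheory intervalIntegral Set

private lemma stmt8_aux (a b : ℝ) (hb : 0 < b) (hba : b < a) :
    ∫ μ in b..a, 1 / (μ^2 * Real.sqrt ((a - μ)*(μ - b)))
      = Real.pi * (a + b) / (2 * (a*b) * Real.sqrt (a*b)) := by
  have ha : 0 < a := hb.trans hba
  have hab : 0 < a * b := mul_pos ha hb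
  have hr : 0 < Real.sqrt (a*b) := Real.sqrt_pos.2 hab
  have hr2 : Real.sqrt (a*b) ^ 2 = a * b := Real.sq_sqrt hab.le
  set r := Real.sqrt (a*b) with hrdef
  set F : ℝ → ℝ := fun x =>
    Real.sqrt ((a - x)*(x - b)) / (a*b*x)
      + (a+b)/(2*(a*b)*r) * Real.arcsin (((a+b)*x - 2*(a*b))/((a-b)*x)) with hF
  set g : ℝ → ℝ := fun x => 1 / (x^2 * Real.sqrt ((a - x)*(x - b))) with hg
  have hcont : ContinuousOn F (Icc b a) := by
    apply ContinuousOn.add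
    · apply ContinuousOn.div
      · exact Real.continuous_sqrt.comp_continuousOn (by fun_prop)
      · fun_prop
      · intro x hx
        have : 0 < x := lt_of_lt_of_le hb hx.1
        positivity
    · apply ContinuousOn.mul continuousOn_const
      apply Real.continuous_arcsin.comp_continuousOn
      apply ContinuousOn.div (by fun_prop) (by fun_prop)
      intro x hx
      have h1 : 0 < x := lt_of_lt_of_le hb hx.1
      have h2 : 0 < a - b := by linarith
      positivity
  have hderiv : ∀ x ∈ Ioo b a, HasDerivAt F (g x) x := by
    intro x hx
    obtain ⟨hx1, hx2⟩ := hx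
    have hx0 : 0 < x := hb.trans hx1
    have hP : 0 < (a - x)*(x - b) := mul_pos (by linarith) (by linarith)
    have hs : 0 < Real.sqrt ((a - x)*(x - b)) := Real.sqrt_pos.2 hP
    have hs2 : Real.sqrt ((a - x)*(x - b)) ^ 2 = (a - x)*(x - b) := Real.sq_sqrt hP.le
    set s := Real.sqrt ((a - x)*(x - b)) with hsdef
    have hd : 0 < a - b := by linarith
    -- derivative of the inner polynomial
    have hp : HasDerivAt (fun y => (a - y)*(y - b)) (a + b - 2*x) x := by
      have h1 : HasDerivAt (fun y : ℝ => a - y) (-1) x := (hasDerivAt_id x).const_sub a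
      have h2 : HasDerivAt (fun y : ℝ => y - b) 1 x := (hasDerivAt_id x).sub_const b
      have : HasDerivAt (fun y => (a - y)*(y - b)) (-1 * (x - b) + (a - x) * 1) x := h1.mul h2
      convert this using 1; ring
    have hsq : HasDerivAt (fun y => Real.sqrt ((a - y)*(y - b)))
        ((a + b - 2*x) / (2 * s)) x := hp.sqrt (ne_of_gt hP)
    have hden : HasDerivAt (fun y : ℝ => a*b*y) (a*b) x := by
      simpa using (hasDerivAt_id x).const_mul (a*b)
    have habx : a*b*x ≠ 0 := by positivity
    have d1 : HasDerivAt (fun y => Real.sqrt ((a - y)*(y - b)) / (a*b*y))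
        (((a + b - 2*x) / (2 * s) * (a*b*x) - s * (a*b)) / (a*b*x)^2) x :=
      hsq.div hden habx
    -- the arcsin part
    set v : ℝ → ℝ := fun y => ((a+b)*y - 2*(a*b))/((a-b)*y) with hv
    have hdenv : (a-b)*x ≠ 0 := by positivity
    have hnum : HasDerivAt (fun y : ℝ => (a+b)*y - 2*(a*b)) (a+b) x := by
      simpa using ((hasDerivAt_id x).const_mul (a+b)).sub_const (2*(a*b))
    have hdenv' : HasDerivAt (fun y : ℝ => (a-b)*y) (a-b) x := by
      simpa using (hasDerivAt_id x).const_mul (a-b)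
    have hvd : HasDerivAt v
        (((a+b)*((a-b)*x) - ((a+b)*x - 2*(a*b))*(a-b)) / ((a-b)*x)^2) x :=
      hnum.div hdenv' hdenv
    have hkey : ((a-b)*x)^2 - ((a+b)*x - 2*(a*b))^2 = 4*(a*b)*((a - x)*(x - b)) := by ring
    have hvlt : (v x)^2 < 1 := by
      rw [hv]
      simp only
      rw [div_pow, div_lt_one (by positivity)]
      nlinarith [hkey, mul_pos hab hP]
    have hv1 : v x ≠ 1 := by
      intro he; rw [he] at hvlt; norm_num at hvlt
    have hvm1 : v x ≠ -1 := by
      intro he; rw [he] at hvlt; norm_num at hvlt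
    have harc : HasDerivAt (fun y => Real.arcsin (v y))
        ((1 / Real.sqrt (1 - (v x)^2)) *
          (((a+b)*((a-b)*x) - ((a+b)*x - 2*(a*b))*(a-b)) / ((a-b)*x)^2)) x := by
      have := (Real.hasDerivAt_arcsin hvm1 hv1).comp x hvd
      exact this
    have hsqrt : Real.sqrt (1 - (v x)^2) = 2*r*s/((a-b)*x) := by
      have heq : 1 - (v x)^2 = (2*r*s/((a-b)*x))^2 := by
        rw [hv]
        simp only
        field_simp
        nlinarith [hkey, hr2, hs2]
      rw [heq, Real.sqrt_sq (by positivity)]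
    have dF : HasDerivAt F
        ((((a + b - 2*x) / (2 * s) * (a*b*x) - s * (a*b)) / (a*b*x)^2)
          + (a+b)/(2*(a*b)*r) * ((1 / Real.sqrt (1 - (v x)^2)) *
            (((a+b)*((a-b)*x) - ((a+b)*x - 2*(a*b))*(a-b)) / ((a-b)*x)^2))) x :=
      d1.add (harc.const_mul _)
    have step1 : ((a + b - 2*x) / (2 * s) * (a*b*x) - s * (a*b)) / (a*b*x)^2
        = ((a+b-2*x)*x - 2*((a - x)*(x - b)))/(2*s*(a*b)*x^2) := by
      rw [← hs2]
      field_simp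
    have step2 : (a+b)/(2*(a*b)*r) * ((1 / (2*r*s/((a-b)*x))) *
          (((a+b)*((a-b)*x) - ((a+b)*x - 2*(a*b))*(a-b)) / ((a-b)*x)^2))
        = (a+b)/(2*(a*b)*(s*x)) := by
      rw [← hr2]
      field_simp
      ring
    convert dF using 1
    rw [hg]
    simp only
    rw [hsqrt, ← hsdef, step1, step2]
    field_simp
    ring
  have hpos : ∀ x ∈ Ioo b a, 0 ≤ g x := by
    intro x hx
    have : 0 ≤ Real.sqrt ((a - x)*(x - b)) := Real.sqrt_nonneg _
    positivity
  have hint : IntervalIntegrable g volume b a := by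
    apply intervalIntegrable_deriv_of_nonneg (g := F)
    · rwa [uIcc_of_le hba.le]
    · rwa [min_eq_left hba.le, max_eq_right hba.le]
    · rwa [min_eq_left hba.le, max_eq_right hba.le]
  have hFTC : ∫ μ in b..a, g μ = F a - F b :=
    integral_eq_sub_of_hasDerivAt_of_le hba.le hcont hderiv hint
  have hgeq : ∀ μ, g μ = 1 / (μ^2 * Real.sqrt ((a - μ)*(μ - b))) := fun μ => rfl
  have hFa : F a = (a+b)/(2*(a*b)*r) * (Real.pi/2) := by
    rw [hF]
    simp only
    have h1 : Real.sqrt ((a - a)*(a - b)) = 0 := by simp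
    have h2 : ((a+b)*a - 2*(a*b))/((a-b)*a) = 1 := by
      have hd : 0 < a - b := by linarith
      rw [div_eq_one_iff_eq (by positivity)]; ring
    rw [h1, h2, Real.arcsin_one]
    simp
  have hFb : F b = (a+b)/(2*(a*b)*r) * (-(Real.pi/2)) := by
    rw [hF]
    simp only
    have h1 : Real.sqrt ((a - b)*(b - b)) = 0 := by simp
    have h2 : ((a+b)*b - 2*(a*b))/((a-b)*b) = -1 := by
      have hd : 0 < a - b := by linarith
      rw [div_eq_iff (by positivity)]; ring
    rw [h1, h2, Real.arcsin_neg_one]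
    simp
  calc ∫ μ in b..a, 1 / (μ^2 * Real.sqrt ((a - μ)*(μ - b)))
      = F a - F b := hFTC
    _ = Real.pi * (a + b) / (2 * (a*b) * r) := by
        rw [hFa, hFb]; field_simp; ring

theorem stmt_8 (e₁ e₂ : ℝ) (h : e₂ < e₁) (h₂ : 0 < e₂) :
    2 * ∫ μ in e₂..e₁, 1 / (μ^2 * Real.sqrt (-((μ - e₁)*(μ - e₂))))
      = Real.pi * (e₁ + e₂) / (e₁*e₂) ^ ((3:ℝ)/2) := by
  have h1 : 0 < e₁ := h₂.trans h
  have hab : 0 < e₁ * e₂ := mul_pos h1 h₂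
  have hr : 0 < Real.sqrt (e₁*e₂) := Real.sqrt_pos.2 hab
  have hfun : (fun μ => 1 / (μ^2 * Real.sqrt (-((μ - e₁)*(μ - e₂)))))
      = fun μ => 1 / (μ^2 * Real.sqrt ((e₁ - μ)*(μ - e₂))) := by
    funext μ
    rw [show -((μ - e₁)*(μ - e₂)) = (e₁ - μ)*(μ - e₂) by ring]
  rw [show (∫ μ in e₂..e₁, 1 / (μ^2 * Real.sqrt (-((μ - e₁)*(μ - e₂)))))
      = ∫ μ in e₂..e₁, 1 / (μ^2 * Real.sqrt ((e₁ - μ)*(μ - e₂))) by rw [hfun],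
    stmt8_aux e₁ e₂ h₂ h]
  have hpow : (e₁*e₂) ^ ((3:ℝ)/2) = (e₁*e₂) * Real.sqrt (e₁*e₂) := by
    rw [show (3:ℝ)/2 = 1 + 1/2 by norm_num, Real.rpow_add hab, Real.rpow_one,
      ← Real.sqrt_eq_rpow]
  rw [hpow]
  field_simp
end

section
/- Let λ ∈ ℝ, let η_λ be the unique positive root of μ⁴ + 2λμ³ = 1, and define ξ(e₁) = (1/(2e₁))√(1 + (e₁(e₁+2λ))²) for e₁ > η_λ. Then ξ is a strictly increasing real-analytic function of e₁ on (η_λ, ∞), mapping it bijectively onto (ξ(η_λ), ∞). -/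
open Set

lemma my_analyticAt_sqrt {x : ℝ} (hx : 0 < x) : AnalyticAt ℝ Real.sqrt x := by
  have h1 : AnalyticAt ℂ (fun z : ℂ => z ^ (1/2 : ℂ)) (x : ℂ) := by
    apply AnalyticAt.cpow analyticAt_id analyticAt_const
    simp [Complex.mem_slitPlane_iff, hx]
  have h2 : AnalyticAt ℝ (fun y : ℝ => ((y : ℂ) ^ (1/2 : ℂ)).re) x := by
    have hof : AnalyticAt ℝ (fun y : ℝ => (y : ℂ)) x := Complex.ofRealCLM.analyticAt x
    have hcomp : AnalyticAt ℝ (fun y : ℝ => (y : ℂ) ^ (1/2 : ℂ)) x :=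
      h1.restrictScalars.comp hof
    exact (Complex.reCLM.analyticAt _).comp hcomp
  apply h2.congr
  have hmem : Set.Ioi (0:ℝ) ∈ nhds x := Ioi_mem_nhds hx
  filter_upwards [hmem] with y hy
  have hy0 : (0:ℝ) ≤ y := le_of_lt hy
  have : ((y ^ ((1:ℝ)/2) : ℝ) : ℂ) = (y : ℂ) ^ (((1:ℝ)/2 : ℝ) : ℂ) :=
    Complex.ofReal_cpow hy0 _
  have h12 : (((1:ℝ)/2 : ℝ) : ℂ) = (1/2 : ℂ) := by norm_num
  rw [h12] at this
  have := congrArg Complex.re this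
  simp only [Complex.ofReal_re] at this
  rw [← this, ← Real.sqrt_eq_rpow]

theorem stmt_16 (l η : ℝ) (hη : 0 < η) (hroot : η^4 + 2*l*η^3 - 1 = 0)
    (ξ : ℝ → ℝ)
    (hξ : ∀ e₁ : ℝ, ξ e₁ = (1/(2*e₁)) * Real.sqrt (1 + (e₁*(e₁ + 2*l))^2)) :
    StrictMonoOn ξ (Set.Ioi η) ∧ AnalyticOn ℝ ξ (Set.Ioi η) ∧
    Set.BijOn ξ (Set.Ioi η) (Set.Ioi (ξ η)) := by
  have hl : 0 < η + 2*l := by nlinarith [pow_pos hη 3, pow_pos hη 2]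
  set h : ℝ → ℝ := fun e => 1/(4*e^2) + (e+2*l)^2/4 with hh
  -- ξ e = sqrt (h e) for e > 0
  have hξh : ∀ e : ℝ, 0 < e → ξ e = Real.sqrt (h e) := by
    intro e he
    have hX : (0:ℝ) ≤ 1 + (e*(e+2*l))^2 := by positivity
    have key : h e = ((1/(2*e)) * Real.sqrt (1 + (e*(e+2*l))^2))^2 := by
      rw [mul_pow, Real.sq_sqrt hX, hh]
      field_simp
      ring
    rw [hξ, key, Real.sqrt_sq (by positivity)]
  -- continuity of h on Ici η
  have hcont : ContinuousOn h (Set.Ici η) := by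
    apply ContinuousOn.add
    · apply ContinuousOn.div continuousOn_const (by fun_prop)
      intro x hx
      have : 0 < x := lt_of_lt_of_le hη hx
      positivity
    · fun_prop
  -- h strictly monotone on Ici η
  have hmono : StrictMonoOn h (Set.Ici η) := by
    apply strictMonoOn_of_deriv_pos (convex_Ici η) hcont
    intro x hx
    rw [interior_Ici] at hx
    have hx0 : 0 < x := hη.trans hx
    have d1 : HasDerivAt (fun e : ℝ => 4*e^2) (8*x) x := by
      have := ((hasDerivAt_pow 2 x).const_mul (4:ℝ))
      convert this using 1
      · rfl
      · rfl
      ring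
    have d2 : HasDerivAt (fun e : ℝ => 1/(4*e^2)) ((0*(4*x^2) - 1*(8*x))/(4*x^2)^2) x :=
      (hasDerivAt_const x (1:ℝ)).div d1 (by positivity)
    have d3 : HasDerivAt (fun e : ℝ => (e+2*l)^2/4) (2*(x+2*l)^1*1/4) x := by
      exact (((hasDerivAt_id x).add_const (2*l)).pow 2).div_const 4
    have hd : HasDerivAt h ((0*(4*x^2) - 1*(8*x))/(4*x^2)^2 + 2*(x+2*l)^1*1/4) x := d2.add d3
    rw [hd.deriv]
    have key : 1 < x^3*(x+2*l) := by
      have h1 : η^3*(η+2*l) = 1 := by nlinarith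
      have hx' : η < x := hx
      have h2 : η^3 < x^3 := by
        nlinarith [mul_pos (sub_pos.mpr hx') (show (0:ℝ) < x^2 + x*η + η^2 by positivity)]
      have h3 : η + 2*l < x + 2*l := by linarith
      calc 1 = η^3*(η+2*l) := h1.symm
        _ < x^3*(x+2*l) := by
            apply mul_lt_mul h2 h3.le hl (by positivity)
    have heq : (0*(4*x^2) - 1*(8*x))/(4*x^2)^2 + 2*(x+2*l)^1*1/4
        = (x^3*(x+2*l) - 1)/(2*x^3) := by
      field_simp
      ring
    rw [heq]
    apply div_pos (by linarith) (by positivity)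
  -- ξ strictly monotone on Ici η
  have hmξ : StrictMonoOn ξ (Set.Ici η) := by
    intro a ha b hb hab
    rw [hξh a (lt_of_lt_of_le hη ha), hξh b (lt_of_lt_of_le hη hb)]
    apply Real.sqrt_lt_sqrt _ (hmono ha hb hab)
    have ha0 : 0 < a := lt_of_lt_of_le hη ha
    rw [hh]
    positivity
  refine ⟨hmξ.mono Set.Ioi_subset_Ici_self, ?_, ?_⟩
  · -- analyticity
    apply AnalyticOnNhd.analyticOn
    intro x hx
    have hx0 : 0 < x := hη.trans hx
    have ha : AnalyticAt ℝ (fun e : ℝ => (1/(2*e)) * Real.sqrt (1 + (e*(e + 2*l))^2)) x := by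
      apply AnalyticAt.mul
      · exact analyticAt_const.div (analyticAt_const.mul analyticAt_id) (by positivity)
      · have hinner : AnalyticAt ℝ (fun e : ℝ => 1 + (e*(e + 2*l))^2) x :=
          analyticAt_const.add ((analyticAt_id.mul (analyticAt_id.add analyticAt_const)).pow 2)
        exact (my_analyticAt_sqrt (by positivity)).comp hinner
    exact ha.congr (Filter.Eventually.of_forall fun y => (hξ y).symm)
  · -- bijection
    refine ⟨?_, (hmξ.mono Set.Ioi_subset_Ici_self).injOn, ?_⟩
    · intro x hx
      exact hmξ (Set.self_mem_Ici) (le_of_lt (a := η) (b := x) hx) hx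
    · intro y hy
      set M : ℝ := max (η+1) (2*y - 2*l + 1) with hM
      have hMη : η < M := lt_of_lt_of_le (by linarith) (le_max_left _ _)
      have hM0 : 0 < M := hη.trans hMη
      have hyM : y < ξ M := by
        have h1 : (M + 2*l)/2 ≤ ξ M := by
          rw [hξh M hM0, hh]
          have : ((M+2*l)/2)^2 ≤ 1/(4*M^2) + (M+2*l)^2/4 := by
            have : 0 ≤ 1/(4*M^2) := by positivity
            nlinarith
          calc (M+2*l)/2 = Real.sqrt (((M+2*l)/2)^2) := by
                rw [Real.sqrt_sq]
                have : η + 2*l < M + 2*l := by linarith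
                linarith
            _ ≤ _ := Real.sqrt_le_sqrt this
        have h2 : 2*y - 2*l + 1 ≤ M := le_max_right _ _
        have : y < (M + 2*l)/2 := by linarith
        linarith
      have hcξ : ContinuousOn ξ (Set.Icc η M) := by
        apply ContinuousOn.congr (Real.continuous_sqrt.comp_continuousOn
          (hcont.mono (Set.Icc_subset_Ici_self)))
        intro e he
        exact hξh e (lt_of_lt_of_le hη he.1)
      have hsub := intermediate_value_Icc (le_of_lt hMη) hcξ
      have hymem : y ∈ Set.Icc (ξ η) (ξ M) := ⟨le_of_lt hy, le_of_lt hyM⟩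
      obtain ⟨x, hxmem, hxy⟩ := hsub hymem
      refine ⟨x, ?_, hxy⟩
      rcases lt_or_eq_of_le hxmem.1 with hlt | heq
      · exact hlt
      · exfalso
        rw [← heq] at hxy
        rw [hxy] at hy
        exact lt_irrefl y hy
end

section
/- Let λ < 0 and u_λ be the unique positive root of 4λ²u³ + 8λ³u² − u + 2λ = 0. If e₁ = u_λ and ξ = (1/(2e₁))√(1 + (e₁(e₁+2λ))²), then 4λξ + 1 = 0, i.e., ξ = −1/(4λ). -/
theorem stmt_17 (l u ξ : ℝ) (hl : l < 0) (hu : 0 < u)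
    (hcubic : 4*l^2*u^3 + 8*l^3*u^2 - u + 2*l = 0)
    (hξ : ξ = (1/(2*u)) * Real.sqrt (1 + (u*(u + 2*l))^2)) :
    4*l*ξ + 1 = 0 := by
  have hl' : l ≠ 0 := ne_of_lt hl
  have hsq : 1 + (u*(u + 2*l))^2 = (-u/(2*l))^2 := by
    field_simp
    nlinarith [sq_nonneg u, sq_nonneg l, mul_pos hu hu]
  have hnn : 0 ≤ -u/(2*l) := by
    rw [div_nonneg_iff]
    right
    constructor <;> nlinarith
  have hsqrt : Real.sqrt (1 + (u*(u + 2*l))^2) = -u/(2*l) := by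
    rw [hsq, Real.sqrt_sq hnn]
  rw [hξ, hsqrt]
  field_simp
  ring
end
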